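/- arXiv:0811.1962 — 3 statements merged into one kernel-verified Lean document; each statement's English description precedes it below -/
import Mathlib

section
/- Christodoulou's theorem on irreducible mass: let M_irr² = (M² + √(M⁴ - J²))/2 for a Kerr black hole with mass M > 0 and angular momentum |J| ≤ M², with Ω_H = a/(r₊²+a²) where a = J/M and r₊ = M + √(M²-a²). Then the differential of M_irr² along a variation (δM, δJ) satisfies δ(M_irr²) = (∂M_irr²/∂M)δM + (∂M_irr²/∂J)δJ ≥ 0 whenever δM ≥ Ω_H δJ. Equivalently, ∂M_irr²/∂M > 0, and (∂M_irr²/∂M)·Ω_H + ∂M_irr²/∂J = 0 when M⁴ > J². -/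
/-! The horizon angular velocity simplifies to `Ω_H = J / (2M(M² + √(M⁴ - J²)))`, while the partial
derivatives of `M_irr²` are `M + M³/√(M⁴ - J²)` and `-J / (2√(M⁴ - J²))`. Hence
`∂_M M_irr² · Ω_H + ∂_J M_irr² = 0`, so the differential of `M_irr²` is
`∂_M M_irr² · (δM - Ω_H δJ)`, a positive multiple of `δM - Ω_H δJ`. -/

open Real

noncomputable def irreducibleMassSq (M J : ℝ) : ℝ := (M ^ 2 + √(M ^ 4 - J ^ 2)) / 2

section Kerr

variable {M J : ℝ}

theorem hasDerivAt_irreducibleMassSq_mass (hJ : J ^ 2 ≠ M ^ 4) :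
    HasDerivAt (irreducibleMassSq · J) (M + M ^ 3 / √(M ^ 4 - J ^ 2)) M := by
  have hsqrt : HasDerivAt (fun m : ℝ => √(m ^ 4 - J ^ 2)) (4 * M ^ 3 / (2 * √(M ^ 4 - J ^ 2))) M :=
    ((hasDerivAt_pow 4 M).sub_const (J ^ 2)).sqrt (sub_ne_zero.2 hJ.symm) |>.congr_deriv
      (by push_cast; ring)
  exact (((hasDerivAt_pow 2 M).add hsqrt).div_const 2).congr_deriv (by push_cast; ring)

theorem hasDerivAt_irreducibleMassSq_angularMomentum (hJ : J ^ 2 ≠ M ^ 4) :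
    HasDerivAt (irreducibleMassSq M ·) (-(J / (2 * √(M ^ 4 - J ^ 2)))) J := by
  have hsqrt : HasDerivAt (fun j : ℝ => √(M ^ 4 - j ^ 2)) (-(2 * J) / (2 * √(M ^ 4 - J ^ 2))) J :=
    ((hasDerivAt_pow 2 J).const_sub (M ^ 4)).sqrt (sub_ne_zero.2 hJ.symm) |>.congr_deriv
      (by push_cast; ring)
  exact ((hsqrt.const_add (M ^ 2)).div_const 2).congr_deriv (by ring)

theorem kerr_horizonAngularVelocity_eq (hM : 0 < M) (hJ : J ^ 2 ≤ M ^ 4) :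
    (J / M) / ((M + √(M ^ 2 - (J / M) ^ 2)) ^ 2 + (J / M) ^ 2)
      = J / (2 * M * (M ^ 2 + √(M ^ 4 - J ^ 2))) := by
  set s := √(M ^ 4 - J ^ 2)
  have hs2 : s ^ 2 = M ^ 4 - J ^ 2 := sq_sqrt (sub_nonneg.2 hJ)
  have hroot : √(M ^ 2 - (J / M) ^ 2) = s / M := by
    rw [show M ^ 2 - (J / M) ^ 2 = (M ^ 4 - J ^ 2) / M ^ 2 by field_simp,
      sqrt_div' _ (sq_nonneg M), sqrt_sq hM.le]
  have hden : (M + s / M) ^ 2 + (J / M) ^ 2 = 2 * (M ^ 2 + s) := by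
    field_simp
    linear_combination hs2
  rw [hroot, hden, div_div]
  ring

end Kerr

theorem mul_add_mul_nonneg_of_mul_add_eq_zero {p q Ω x y : ℝ} (hp : 0 ≤ p) (hpq : p * Ω + q = 0)
    (hxy : Ω * y ≤ x) : 0 ≤ p * x + q * y := by
  have hdecomp : p * x + q * y = p * (x - Ω * y) := by linear_combination y * hpq
  rw [hdecomp]
  exact mul_nonneg hp (sub_nonneg.2 hxy)

/-- Christodoulou: δ(M_irr²) ≥ 0 whenever δM ≥ Ω_H δJ; equivalently
    ∂M_irr²/∂M > 0 and (∂M_irr²/∂M)·Ω_H + ∂M_irr²/∂J = 0. -/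
theorem christodoulou_irreducible_mass (M J : ℝ) (hM : 0 < M) (hJ : J^2 < M^4)
    (a rp ΩH fM fJ : ℝ)
    (ha : a = J / M)
    (hrp : rp = M + Real.sqrt (M^2 - a^2))
    (hΩH : ΩH = a / (rp^2 + a^2))
    (hfM : fM = deriv (fun m : ℝ => (m^2 + Real.sqrt (m^4 - J^2)) / 2) M)
    (hfJ : fJ = deriv (fun j : ℝ => (M^2 + Real.sqrt (M^4 - j^2)) / 2) J) :
    (∀ δM δJ : ℝ, ΩH * δJ ≤ δM → 0 ≤ fM * δM + fJ * δJ) ∧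
    0 < fM ∧ fM * ΩH + fJ = 0 := by
  have hs : 0 < √(M ^ 4 - J ^ 2) := sqrt_pos.2 (sub_pos.2 hJ)
  have hfM' : fM = M + M ^ 3 / √(M ^ 4 - J ^ 2) :=
    hfM.trans (hasDerivAt_irreducibleMassSq_mass hJ.ne).deriv
  have hfJ' : fJ = -(J / (2 * √(M ^ 4 - J ^ 2))) :=
    hfJ.trans (hasDerivAt_irreducibleMassSq_angularMomentum hJ.ne).deriv
  have hΩH' : ΩH = J / (2 * M * (M ^ 2 + √(M ^ 4 - J ^ 2))) := by
    rw [hΩH, hrp, ha, kerr_horizonAngularVelocity_eq hM hJ.le]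
  have hfM_pos : 0 < fM := by rw [hfM']; positivity
  have hkey : fM * ΩH + fJ = 0 := by
    rw [hfM', hfJ', hΩH']
    field_simp
    ring
  exact ⟨fun δM δJ hδ => mul_add_mul_nonneg_of_mul_add_eq_zero hfM_pos.le hkey hδ, hfM_pos, hkey⟩
end

section
/- If a function H of two variables satisfies H = (χ/√Θ)·A_r = -(χ/√R)·A_θ pointwise, where A_r, A_θ denote the partial derivatives of a function A, and if H is constant along the vector field (√R, √Θ) (i.e., √R·H_r + √Θ·H_θ = 0) together with √R·A_r + √Θ·A_θ = 0, then χ satisfies R·∂_r(χ/√R) + Θ·∂_θ(χ/√Θ) = 0 (wherever A_r or A_θ is nonzero and R, Θ > 0). Conversely, this PDE for χ implies √R·H_r + √Θ·H_θ = 0. -/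
open Filter Topology
set_option maxHeartbeats 1000000


/-- H = (χ/√Θ)·A_r = -(χ/√R)·A_θ is an equipotential-surface function iff
    R ∂_r(χ/√R) + Θ ∂_θ(χ/√Θ) = 0. -/
theorem equipotential_Hphi_condition
    (U : Set (ℝ × ℝ)) (hU : IsOpen U)
    (R Θ χ A : ℝ × ℝ → ℝ)
    (hR : ContDiffOn ℝ (⊤ : ℕ∞) R U) (hΘ : ContDiffOn ℝ (⊤ : ℕ∞) Θ U)
    (hχ : ContDiffOn ℝ (⊤ : ℕ∞) χ U) (hA : ContDiffOn ℝ (⊤ : ℕ∞) A U)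
    (hRpos : ∀ p ∈ U, 0 < R p) (hΘpos : ∀ p ∈ U, 0 < Θ p)
    (hAeq : ∀ p ∈ U, Real.sqrt (R p) * fderiv ℝ A p (1, 0)
        + Real.sqrt (Θ p) * fderiv ℝ A p (0, 1) = 0)
    (hAne : ∀ p ∈ U, ¬(fderiv ℝ A p (1, 0) = 0 ∧ fderiv ℝ A p (0, 1) = 0))
    (H : ℝ × ℝ → ℝ)
    (hH : ∀ p ∈ U, H p = χ p / Real.sqrt (Θ p) * fderiv ℝ A p (1, 0))
    (hH' : ∀ p ∈ U, H p = -(χ p / Real.sqrt (R p)) * fderiv ℝ A p (0, 1)) :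
    ∀ p ∈ U,
      (Real.sqrt (R p) * fderiv ℝ H p (1, 0)
          + Real.sqrt (Θ p) * fderiv ℝ H p (0, 1) = 0)
      ↔ (R p * fderiv ℝ (fun q => χ q / Real.sqrt (R q)) p (1, 0)
          + Θ p * fderiv ℝ (fun q => χ q / Real.sqrt (Θ q)) p (0, 1) = 0) := by
  intro p hp
  have hpU : U ∈ 𝓝 p := hU.mem_nhds hp
  have hRp : 0 < R p := hRpos p hp
  have hΘp : 0 < Θ p := hΘpos p hp
  set sR := Real.sqrt (R p) with hsRdef
  set sΘ := Real.sqrt (Θ p) with hsΘdef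
  have hsR : 0 < sR := Real.sqrt_pos.mpr hRp
  have hsΘ : 0 < sΘ := Real.sqrt_pos.mpr hΘp
  have hRsq : R p = sR * sR := (Real.mul_self_sqrt hRp.le).symm
  have hΘsq : Θ p = sΘ * sΘ := (Real.mul_self_sqrt hΘp.le).symm
  set a := fderiv ℝ A p (1, 0) with hadef
  set b := fderiv ℝ A p (0, 1) with hbdef
  -- differentiability facts
  have hAct : ContDiffAt ℝ (⊤ : ℕ∞) A p := hA.contDiffAt hpU
  have hRd : DifferentiableAt ℝ R p := (hR.contDiffAt hpU).differentiableAt (by simp)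
  have hΘd : DifferentiableAt ℝ Θ p := (hΘ.contDiffAt hpU).differentiableAt (by simp)
  have hχd : DifferentiableAt ℝ χ p := (hχ.contDiffAt hpU).differentiableAt (by simp)
  have hsqR : DifferentiableAt ℝ (fun q => Real.sqrt (R q)) p :=
    hRd.sqrt hRp.ne'
  have hsqΘ : DifferentiableAt ℝ (fun q => Real.sqrt (Θ q)) p :=
    hΘd.sqrt hΘp.ne'
  have hfd : DifferentiableAt ℝ (fun q => χ q / Real.sqrt (R q)) p :=
    ((hχ.contDiffAt hpU).div ((hR.contDiffAt hpU).sqrt hRp.ne') hsR.ne').differentiableAt (by simp)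
  have hgd : DifferentiableAt ℝ (fun q => χ q / Real.sqrt (Θ q)) p :=
    ((hχ.contDiffAt hpU).div ((hΘ.contDiffAt hpU).sqrt hΘp.ne') hsΘ.ne').differentiableAt (by simp)
  -- second derivative of A and symmetry
  have hA1 : ContDiffAt ℝ 1 (fderiv ℝ A) p :=
    hAct.fderiv_right (by exact (WithTop.coe_le_coe.mpr le_top))
  have hA2 : HasFDerivAt (fderiv ℝ A) (fderiv ℝ (fderiv ℝ A) p) p :=
    (hA1.differentiableAt one_ne_zero).hasFDerivAt
  set D2 := fderiv ℝ (fderiv ℝ A) p with hD2def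
  have hev : ∀ᶠ y in 𝓝 p, HasFDerivAt A (fderiv ℝ A y) y := by
    filter_upwards [hpU] with y hy
    exact ((hA.contDiffAt (hU.mem_nhds hy)).differentiableAt (by simp)).hasFDerivAt
  have hsymm : D2 (1, 0) (0, 1) = D2 (0, 1) (1, 0) :=
    second_derivative_symmetric_of_eventually hev hA2 (1, 0) (0, 1)
  -- derivatives of Ar and Aθ
  have hArd : HasFDerivAt (fun q => fderiv ℝ A q (1, 0))
      ((ContinuousLinearMap.apply ℝ ℝ ((1 : ℝ), (0 : ℝ))).comp D2) p :=
    (ContinuousLinearMap.apply ℝ ℝ ((1 : ℝ), (0 : ℝ))).hasFDerivAt.comp p hA2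
  have hAθd : HasFDerivAt (fun q => fderiv ℝ A q (0, 1))
      ((ContinuousLinearMap.apply ℝ ℝ ((0 : ℝ), (1 : ℝ))).comp D2) p :=
    (ContinuousLinearMap.apply ℝ ℝ ((0 : ℝ), (1 : ℝ))).hasFDerivAt.comp p hA2
  -- two product representations of H
  have hHg : H =ᶠ[𝓝 p] fun q => (χ q / Real.sqrt (Θ q)) * fderiv ℝ A q (1, 0) := by
    filter_upwards [hpU] with q hq using hH q hq
  have hHf : H =ᶠ[𝓝 p] fun q => (-(χ q / Real.sqrt (R q))) * fderiv ℝ A q (0, 1) := by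
    filter_upwards [hpU] with q hq using hH' q hq
  have hH1 : HasFDerivAt H
      ((χ p / sΘ) • ((ContinuousLinearMap.apply ℝ ℝ ((1 : ℝ), (0 : ℝ))).comp D2)
        + a • fderiv ℝ (fun q => χ q / Real.sqrt (Θ q)) p) p :=
    (hgd.hasFDerivAt.mul hArd).congr_of_eventuallyEq hHg
  have hH2 : HasFDerivAt H
      ((-(χ p / sR)) • ((ContinuousLinearMap.apply ℝ ℝ ((0 : ℝ), (1 : ℝ))).comp D2)
        + b • (-(fderiv ℝ (fun q => χ q / Real.sqrt (R q)) p))) p := by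
    have := (hfd.neg.hasFDerivAt.mul hAθd).congr_of_eventuallyEq hHf
    refine this.congr_fderiv ?_
    ext v <;> simp [fderiv_neg, hsRdef, hbdef] <;> ring
  set X := fderiv ℝ (fun q => χ q / Real.sqrt (R q)) p (1, 0) with hXdef
  set Y := fderiv ℝ (fun q => χ q / Real.sqrt (Θ q)) p (0, 1) with hYdef
  have e1 : fderiv ℝ H p (0, 1)
      = (χ p / sΘ) * (D2 (0, 1) (1, 0)) + a * Y := by
    rw [hH1.fderiv]
    simp [ContinuousLinearMap.add_apply, ContinuousLinearMap.smul_apply,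
      ContinuousLinearMap.comp_apply, ContinuousLinearMap.apply_apply, smul_eq_mul, hYdef]
  have e2 : fderiv ℝ H p (1, 0)
      = -(χ p / sR) * (D2 (1, 0) (0, 1)) - b * X := by
    rw [hH2.fderiv]
    simp [ContinuousLinearMap.add_apply, ContinuousLinearMap.smul_apply,
      ContinuousLinearMap.comp_apply, ContinuousLinearMap.apply_apply, smul_eq_mul]
    ring
  -- the key combination
  have key : sR * fderiv ℝ H p (1, 0) + sΘ * fderiv ℝ H p (0, 1)
      = -(sR * b * X) + sΘ * a * Y := by
    rw [e1, e2, hsymm]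
    field_simp
    ring
  have hcon : sR * a + sΘ * b = 0 := hAeq p hp
  rw [key, hRsq, hΘsq]
  rcases not_and_or.mp (hAne p hp) with ha | hb
  · -- a ≠ 0
    have hb' : b = -(sR * a) / sΘ := by field_simp; linarith
    have : -(sR * b * X) + sΘ * a * Y = (a / sΘ) * (sR * sR * X + sΘ * sΘ * Y) := by
      rw [hb']; field_simp
    rw [this, mul_eq_zero]
    simp [div_eq_zero_iff, ha, hsΘ.ne', hadef]
  · -- b ≠ 0
    have ha' : a = -(sΘ * b) / sR := by field_simp; linarith
    have : -(sR * b * X) + sΘ * a * Y = (-(b / sR)) * (sR * sR * X + sΘ * sΘ * Y) := by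
      rw [ha']; field_simp; ring
    rw [this, mul_eq_zero]
    simp [div_eq_zero_iff, hb, hsR.ne', hbdef]
end

section
/- Monotonicity of horizon area along an adiabatic Kerr sequence: let M(t) > 0, J(t) be differentiable with J(t)² < M(t)⁴ for all t, and suppose dM/dt ≥ Ω_H(t)·dJ/dt where Ω_H = a/(r₊²+a²), a = J/M, r₊ = M + √(M²-a²). Then t ↦ M_irr(t)² = (M(t)² + √(M(t)⁴ - J(t)²))/2 is nondecreasing. -/
/-!
The first law of black-hole mechanics, `dM - Ω_H dJ = (κ / 8π) dA` with horizon area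
`A = 16π M_irr²` and surface gravity `κ = √(M⁴ - J²) / (2M (M² + √(M⁴ - J²)))`, says that
`d(M_irr²)/dt = (M' - Ω_H J') / (2κ)`. Since `κ > 0` for a non-extremal hole, the rate condition
makes the derivative of `M_irr²` nonnegative.
-/

open Real

/-- The horizon angular velocity `a / (r₊² + a²)` with `a = J / M` and `r₊ = M + √(M² - a²)`. -/
noncomputable def kerrAngularVelocity (M J : ℝ) : ℝ :=
  J / M / ((M + √(M ^ 2 - (J / M) ^ 2)) ^ 2 + (J / M) ^ 2)

lemma kerrAngularVelocity_eq {M J : ℝ} (hM : 0 < M) (hJM : J ^ 2 ≤ M ^ 4) :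
    kerrAngularVelocity M J = J / (2 * M * (M ^ 2 + √(M ^ 4 - J ^ 2))) := by
  set s := √(M ^ 4 - J ^ 2)
  have hs_sq : s ^ 2 = M ^ 4 - J ^ 2 := sq_sqrt (by linarith)
  have h_sqrt : √(M ^ 2 - (J / M) ^ 2) = s / M := by
    rw [show M ^ 2 - (J / M) ^ 2 = (M ^ 4 - J ^ 2) / M ^ 2 by field_simp,
      sqrt_div' _ (sq_nonneg M), sqrt_sq hM.le]
  have h_denom : (M + s / M) ^ 2 + (J / M) ^ 2 = 2 * (M ^ 2 + s) := by
    field_simp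
    linear_combination hs_sq
  have : 0 < M ^ 2 + s := by positivity
  rw [kerrAngularVelocity, h_sqrt, h_denom]
  field_simp

lemma hasDerivAt_irreducibleMassSq {M J : ℝ → ℝ} {M' J' t : ℝ}
    (hM : HasDerivAt M M' t) (hJ : HasDerivAt J J' t) (hMpos : 0 < M t)
    (hJM : J t ^ 2 < M t ^ 4) :
    HasDerivAt (fun u => irreducibleMassSq (M u) (J u))
      (M t * (M t ^ 2 + √(M t ^ 4 - J t ^ 2)) / √(M t ^ 4 - J t ^ 2) *
        (M' - kerrAngularVelocity (M t) (J t) * J')) t := by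
  have h_disc : 0 < M t ^ 4 - J t ^ 2 := by linarith
  have h_disc_deriv : HasDerivAt (fun u => M u ^ 4 - J u ^ 2)
      (4 * M t ^ 3 * M' - 2 * J t * J') t :=
    ((hM.pow 4).sub (hJ.pow 2)).congr_deriv (by norm_num)
  have h_sqrt := h_disc_deriv.sqrt h_disc.ne'
  refine (((hM.pow 2).add h_sqrt).div_const 2).congr_deriv ?_
  rw [kerrAngularVelocity_eq hMpos hJM.le]
  field_simp
  ring

/-- Monotonicity of M_irr² along an adiabatic Kerr sequence with
    dM/dt ≥ Ω_H dJ/dt. -/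
theorem irreducible_mass_monotone
    (I : Set ℝ) (hI : Convex ℝ I)
    (M J M' J' : ℝ → ℝ)
    (hMd : ∀ t ∈ I, HasDerivAt M (M' t) t)
    (hJd : ∀ t ∈ I, HasDerivAt J (J' t) t)
    (hMpos : ∀ t ∈ I, 0 < M t)
    (hJM : ∀ t ∈ I, (J t)^2 < (M t)^4)
    (a rp ΩH : ℝ → ℝ)
    (ha : ∀ t, a t = J t / M t)
    (hrp : ∀ t, rp t = M t + Real.sqrt ((M t)^2 - (a t)^2))
    (hΩH : ∀ t, ΩH t = a t / ((rp t)^2 + (a t)^2))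
    (hrate : ∀ t ∈ I, ΩH t * J' t ≤ M' t) :
    MonotoneOn (fun t => ((M t)^2 + Real.sqrt ((M t)^4 - (J t)^2)) / 2) I := by
  have hΩ : ∀ t, ΩH t = kerrAngularVelocity (M t) (J t) := fun t => by
    rw [hΩH, hrp, ha, kerrAngularVelocity]
  have hderiv t (ht : t ∈ I) :=
    hasDerivAt_irreducibleMassSq (hMd t ht) (hJd t ht) (hMpos t ht) (hJM t ht)
  refine monotoneOn_of_hasDerivWithinAt_nonneg hI
    (fun t ht => (hderiv t ht).continuousAt.continuousWithinAt)
    (fun t ht => (hderiv t (interior_subset ht)).hasDerivWithinAt) fun t ht => ?_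
  have ht := interior_subset ht
  have hMt := hMpos t ht
  exact mul_nonneg (by positivity) (sub_nonneg.mpr (hΩ t ▸ hrate t ht))
end
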